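/- For the curve x(t) = C_m(t)·sin(φ+t) − S_m(t)·cos(φ+t), y(t) = C_m(t)·cos(φ+t) + S_m(t)·sin(φ+t) on [0,t] with t > 0, the arc length ∫_0^t √(x'(u)^2 + y'(u)^2) du equals t^{2m+1}/(2m+1)!. -/

import Mathlib

/-!
Write `C = Cser m`, `S = Sser m`. Then `C' = -S` and `S' = C - r`, where
`r(u) = (-1)^m u^(2m)/(2m)!` is the first cosine term missing from `C`. Differentiating the
curve, everything cancels except `r`: the velocity is `r(u) • (cos (φ + u), -sin (φ + u))`,
so the speed is `|r(u)| = u^(2m)/(2m)!`, whose integral over `[0, t]` is `t^(2m+1)/(2m+1)!`.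
-/

open Real

/-- Partial sum of the cosine Taylor series: first `n+1` terms. -/
noncomputable def Cser (n : ℕ) (t : ℝ) : ℝ :=
  ∑ i ∈ Finset.range (n + 1), (-1 : ℝ) ^ i * t ^ (2 * i) / (2 * i).factorial

/-- Partial sum of the sine Taylor series: first `n` terms. -/
noncomputable def Sser (n : ℕ) (t : ℝ) : ℝ :=
  ∑ i ∈ Finset.range n, (-1 : ℝ) ^ i * t ^ (2 * i + 1) / (2 * i + 1).factorial

theorem hasDerivAt_mul_pow_succ_div_factorial (a : ℝ) (k : ℕ) (v : ℝ) :
    HasDerivAt (fun v : ℝ => a * v ^ (k + 1) / (k + 1).factorial)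
      (a * v ^ k / k.factorial) v := by
  refine (((hasDerivAt_pow (k + 1) v).const_mul a).div_const _).congr_deriv ?_
  rw [Nat.factorial_succ]
  push_cast
  field_simp

theorem integral_pow_div_factorial (k : ℕ) (t : ℝ) :
    ∫ u in (0 : ℝ)..t, u ^ k / k.factorial = t ^ (k + 1) / (k + 1).factorial := by
  have hderiv (v : ℝ) : HasDerivAt (fun v : ℝ => v ^ (k + 1) / (k + 1).factorial)
      (v ^ k / k.factorial) v := by
    simpa using hasDerivAt_mul_pow_succ_div_factorial 1 k v
  rw [intervalIntegral.integral_eq_sub_of_hasDerivAt (fun v _ => hderiv v)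
    (((continuous_pow k).div_const _).intervalIntegrable _ _)]
  simp

theorem hasDerivAt_Cser (n : ℕ) (v : ℝ) : HasDerivAt (Cser n) (-Sser n v) v := by
  induction n with
  | zero =>
    have hC : Cser 0 = fun _ => 1 := by funext; simp [Cser]
    simpa [hC, Sser] using hasDerivAt_const v (1 : ℝ)
  | succ n ih =>
    have hC : Cser (n + 1) = fun v =>
        Cser n v + (-1) ^ (n + 1) * v ^ (2 * n + 1 + 1) / (2 * n + 1 + 1).factorial := by
      funext v
      rw [Cser, Finset.sum_range_succ, ← Cser]
      rfl -- `2 * (n + 1)` and `2 * n + 1 + 1` agree definitionally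
    rw [hC, Sser, Finset.sum_range_succ, ← Sser]
    exact (ih.fun_add (hasDerivAt_mul_pow_succ_div_factorial _ (2 * n + 1) v)).congr_deriv
      (by ring)

theorem hasDerivAt_Sser (n : ℕ) (v : ℝ) :
    HasDerivAt (Sser n) (Cser n v - (-1) ^ n * v ^ (2 * n) / (2 * n).factorial) v := by
  induction n with
  | zero =>
    have hS : Sser 0 = fun _ => 0 := by funext; simp [Sser]
    simpa [hS, Cser] using hasDerivAt_const v (0 : ℝ)
  | succ n ih =>
    have hS : Sser (n + 1) = fun v =>
        Sser n v + (-1) ^ n * v ^ (2 * n + 1) / (2 * n + 1).factorial := by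
      funext v
      rw [Sser, Finset.sum_range_succ, ← Sser]
    rw [hS, Cser, Finset.sum_range_succ, ← Cser]
    exact (ih.fun_add (hasDerivAt_mul_pow_succ_div_factorial _ (2 * n) v)).congr_deriv (by ring)

section Involute

variable {c s : ℝ → ℝ} {r φ u : ℝ}

theorem hasDerivAt_mul_sin_sub_mul_cos (hc : HasDerivAt c (-s u) u)
    (hs : HasDerivAt s (c u - r) u) :
    HasDerivAt (fun v => c v * sin (φ + v) - s v * cos (φ + v)) (r * cos (φ + u)) u := by
  have hθ := (hasDerivAt_id' u).const_add φ
  exact ((hc.fun_mul hθ.sin).fun_sub (hs.fun_mul hθ.cos)).congr_deriv (by ring)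

theorem hasDerivAt_mul_cos_add_mul_sin (hc : HasDerivAt c (-s u) u)
    (hs : HasDerivAt s (c u - r) u) :
    HasDerivAt (fun v => c v * cos (φ + v) + s v * sin (φ + v)) (-(r * sin (φ + u))) u := by
  have hθ := (hasDerivAt_id' u).const_add φ
  exact ((hc.fun_mul hθ.cos).fun_add (hs.fun_mul hθ.sin)).congr_deriv (by ring)

end Involute

theorem sqrt_mul_cos_sq_add_mul_sin_sq (r θ : ℝ) :
    √((r * cos θ) ^ 2 + (-(r * sin θ)) ^ 2) = |r| := by
  rw [← sqrt_sq_eq_abs]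
  congr 1
  linear_combination r ^ 2 * sin_sq_add_cos_sq θ

theorem abs_neg_one_pow_mul_even_pow_div_factorial (n : ℕ) (v : ℝ) :
    |(-1) ^ n * v ^ (2 * n) / (2 * n).factorial| = v ^ (2 * n) / (2 * n).factorial := by
  rw [mul_div_assoc, abs_mul, abs_neg_one_pow, one_mul,
    abs_of_nonneg (div_nonneg ((even_two_mul n).pow_nonneg v) (Nat.cast_nonneg _))]

theorem arclength_even_involute_general (φ : ℝ) (m : ℕ) (t : ℝ) :
    (∫ u in (0:ℝ)..t, Real.sqrt
        ((deriv (fun v => Cser m v * Real.sin (φ + v) - Sser m v * Real.cos (φ + v)) u) ^ 2 +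
         (deriv (fun v => Cser m v * Real.cos (φ + v) + Sser m v * Real.sin (φ + v)) u) ^ 2))
      = t ^ (2 * m + 1) / (2 * m + 1).factorial := by
  have speed (u : ℝ) :
      √((deriv (fun v => Cser m v * sin (φ + v) - Sser m v * cos (φ + v)) u) ^ 2 +
        (deriv (fun v => Cser m v * cos (φ + v) + Sser m v * sin (φ + v)) u) ^ 2)
        = u ^ (2 * m) / (2 * m).factorial := by
    rw [(hasDerivAt_mul_sin_sub_mul_cos (hasDerivAt_Cser m u) (hasDerivAt_Sser m u)).deriv,
      (hasDerivAt_mul_cos_add_mul_sin (hasDerivAt_Cser m u) (hasDerivAt_Sser m u)).deriv,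
      sqrt_mul_cos_sq_add_mul_sin_sq, abs_neg_one_pow_mul_even_pow_div_factorial]
  simp_rw [speed]
  exact integral_pow_div_factorial (2 * m) t

theorem arclength_even_involute (φ : ℝ) (m : ℕ) (hm : 1 ≤ m) (t : ℝ) (ht : 0 < t) :
    (∫ u in (0:ℝ)..t, Real.sqrt
        ((deriv (fun v => Cser m v * Real.sin (φ + v) - Sser m v * Real.cos (φ + v)) u) ^ 2 +
         (deriv (fun v => Cser m v * Real.cos (φ + v) + Sser m v * Real.sin (φ + v)) u) ^ 2))
      = t ^ (2 * m + 1) / (2 * m + 1).factorial :=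
  arclength_even_involute_general φ m t
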